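/- Let w_0,...,w_n and d_0,...,d_m be positive integers with Σ_j d_j ≤ Σ_i w_i, and let f be a rational number. Suppose there is a subset {0,…,l} of the index set {0,…,m} and a relabeling such that: for j ≤ l, f·d_j ≡ f·w_j (mod ℤ) and f·d_j ∉ ℤ; and for j > l, f·d_j ∈ ℤ. Let I = {i : f·w_i ∈ ℤ} with {0,…,l} ∩ I = ∅. Then Σ_{j=0}^m ⌈f·d_j⌉ - Σ_{i=0}^n ⌈f·w_i⌉ ≤ f·(Σ_j d_j - Σ_i w_i). -/

import Mathlib

/-!
Write `⌈x⌉ = x + fract (-x)`. The defect `fract (-x)` is nonnegative, vanishes on integers and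
only depends on `x` modulo `ℤ`. Hence the defects of the `f * dⱼ` sum to those of the
`f * dⱼ` with `j ≤ l`, which equal the defects of the matching `f * wⱼ`, and these are at most
the sum of all defects of the `f * wᵢ`.
-/

open Finset

section CeilDefect

variable {α ι κ : Type*} [Ring α] [LinearOrder α] [IsStrictOrderedRing α] [FloorRing α]

theorem Int.ceil_eq_add_fract_neg (x : α) : (⌈x⌉ : α) = x + Int.fract (-x) := by
  rw [Int.fract, Int.floor_neg]
  push_cast
  abel

theorem Int.fract_neg_eq_of_sub_eq_intCast {x y : α} (h : ∃ t : ℤ, x - y = t) :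
    Int.fract (-x) = Int.fract (-y) := by
  obtain ⟨t, ht⟩ := h
  exact Int.fract_eq_fract.2 ⟨-t, by rw [Int.cast_neg, ← ht]; abel⟩

theorem sum_fract_neg_le_of_injOn [Fintype ι] [Fintype κ] (a : ι → α) (b : κ → α)
    (s : Finset ι) (e : ι → κ) (he : Set.InjOn e s) (hs : ∀ i ∉ s, ∃ t : ℤ, a i = t)
    (hab : ∀ i ∈ s, ∃ t : ℤ, a i - b (e i) = t) :
    ∑ i, Int.fract (-a i) ≤ ∑ k, Int.fract (-b k) := by
  classical
  calc ∑ i, Int.fract (-a i)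
      = ∑ i ∈ s, Int.fract (-a i) := by
        refine (sum_subset (subset_univ s) fun i _ hi => ?_).symm
        obtain ⟨t, ht⟩ := hs i hi
        rw [ht, ← Int.cast_neg, Int.fract_intCast]
    _ = ∑ i ∈ s, Int.fract (-b (e i)) :=
        sum_congr rfl fun i hi => Int.fract_neg_eq_of_sub_eq_intCast (hab i hi)
    _ = ∑ k ∈ s.image e, Int.fract (-b k) := by rw [sum_image he]
    _ ≤ ∑ k, Int.fract (-b k) :=
        sum_le_sum_of_subset_of_nonneg (subset_univ _) fun _ _ _ => Int.fract_nonneg _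

theorem sum_ceil_sub_sum_ceil_le_of_injOn [Fintype ι] [Fintype κ] (a : ι → α) (b : κ → α)
    (s : Finset ι) (e : ι → κ) (he : Set.InjOn e s) (hs : ∀ i ∉ s, ∃ t : ℤ, a i = t)
    (hab : ∀ i ∈ s, ∃ t : ℤ, a i - b (e i) = t) :
    ∑ i, (⌈a i⌉ : α) - ∑ k, (⌈b k⌉ : α) ≤ ∑ i, a i - ∑ k, b k := by
  simp only [Int.ceil_eq_add_fract_neg, sum_add_distrib, add_sub_add_comm]
  exact (add_le_iff_nonpos_right _).2 (sub_nonpos.2 (sum_fract_neg_le_of_injOn a b s e he hs hab))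

end CeilDefect

/-- Arithmetic heart of Lemma 6.1(1): with the relabelled index structure of a
quasismooth complete intersection, Σⱼ⌈f·dⱼ⌉ - Σᵢ⌈f·wᵢ⌉ ≤ f·(Σdⱼ - Σwᵢ). -/
theorem stmt6 (n m l : ℕ) (w : Fin (n + 1) → ℕ) (d : Fin (m + 1) → ℕ)
    (hlm : l ≤ m) (hln : l ≤ n) (f : ℚ)
    (h1 : ∀ j : ℕ, (hj : j ≤ l) →
      (∃ t : ℤ, f * (d ⟨j, by omega⟩ : ℚ) - f * (w ⟨j, by omega⟩ : ℚ) = (t : ℚ)) ∧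
      ¬ ∃ t : ℤ, f * (d ⟨j, by omega⟩ : ℚ) = (t : ℚ))
    (h2 : ∀ j : Fin (m + 1), l < (j : ℕ) → ∃ t : ℤ, f * (d j : ℚ) = (t : ℚ)) :
    ((∑ j, ⌈f * (d j : ℚ)⌉ : ℤ) : ℚ) - ((∑ i, ⌈f * (w i : ℚ)⌉ : ℤ) : ℚ)
      ≤ f * ((∑ j, (d j : ℚ)) - ∑ i, (w i : ℚ)) := by
  let s : Finset (Fin (m + 1)) := {j | (j : ℕ) ≤ l}
  -- the identity `j ↦ j` on `s`, made total by `min`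
  let e : Fin (m + 1) → Fin (n + 1) := fun j => ⟨min j n, by omega⟩
  have he : Set.InjOn e s := fun j hj k hk hjk => by
    simp only [s, e, coe_filter, mem_univ, true_and, Set.mem_ofPred_eq, Fin.mk.injEq] at hj hk hjk
    omega
  have key := sum_ceil_sub_sum_ceil_le_of_injOn (fun j => f * d j) (fun i => f * w i) s e he
    (fun j hj => h2 j (by simpa [s] using hj)) fun j hj => by
      simp only [s, mem_filter, mem_univ, true_and] at hj
      simpa [e, min_eq_left (hj.trans hln)] using (h1 j hj).1
  push_cast
  rwa [mul_sub, mul_sum, mul_sum]
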